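/- Let A be an m×n real matrix with no zero rows, and define F = Σ_{j=1}^m (2/‖A_j‖²) R_m ⋯ R_{j+1} A_j e_j^T (an n×m matrix, where the product of reflections is empty, i.e. the identity, for j=m). Then F A = I_n - R_A, where R_A = R_m ⋯ R_1 and R_i = I_n - 2 A_i A_i^T/‖A_i‖². -/

import Mathlib

open Matrix

/-- The Householder reflection determined by a (nonzero) vector `a`. -/
noncomputable def reflOf {n : ℕ} (a : Fin n → ℝ) : Matrix (Fin n) (Fin n) ℝ :=
  1 - (2 / (∑ j, a j ^ 2)) • Matrix.vecMulVec a a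

/-- The product `R_m ⋯ R_2 R_1` of the Householder reflections of the rows of `A`. -/
noncomputable def reflProd {m n : ℕ} (A : Matrix (Fin m) (Fin n) ℝ) :
    Matrix (Fin n) (Fin n) ℝ :=
  (((List.finRange m).map (fun i => reflOf (A i))).reverse).prod

/-- The product `R_m ⋯ R_{j+1}` of the reflections of the rows of `A` of index
greater than `j` (the identity matrix when `j = m`). -/
noncomputable def reflTailProd {m n : ℕ} (A : Matrix (Fin m) (Fin n) ℝ) (j : Fin m) :
    Matrix (Fin n) (Fin n) ℝ :=
  ((((List.finRange m).filter (fun i => j < i)).map (fun i => reflOf (A i))).reverse).prod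

/-- The matrix `F = Σ_j (2/‖A_j‖²) R_m ⋯ R_{j+1} A_j e_jᵀ`. -/
noncomputable def Fmat {m n : ℕ} (A : Matrix (Fin m) (Fin n) ℝ) :
    Matrix (Fin n) (Fin m) ℝ :=
  ∑ j : Fin m, (2 / (∑ k, A j k ^ 2)) •
    (reflTailProd A j * Matrix.vecMulVec (A j) (Pi.single j 1))

/-! Since `(2/‖a‖²) • a aᵀ = I - R_a`, and `e_jᵀ A = A_j`, the `j`-th summand of `F A` is
`R_m ⋯ R_{j+1} (I - R_j) = R_m ⋯ R_{j+1} - R_m ⋯ R_j`, so the sum telescopes to `I - R_m ⋯ R_1`. -/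

lemma one_sub_reflOf {n : ℕ} (a : Fin n → ℝ) :
    1 - reflOf a = (2 / ∑ j, a j ^ 2) • vecMulVec a a :=
  sub_sub_cancel _ _

section Tail

variable {m n : ℕ} (A : Matrix (Fin (m + 1)) (Fin n) ℝ)

lemma reflProd_succ : reflProd A = reflProd (Fin.tail A) * reflOf (A 0) := by
  simp [reflProd, List.finRange_succ, Function.comp_def, Fin.tail]

lemma reflTailProd_zero : reflTailProd A 0 = reflProd (Fin.tail A) := by
  simp [reflTailProd, reflProd, List.finRange_succ, List.filter_map, Function.comp_def,
    Fin.succ_pos, Fin.tail]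

lemma reflTailProd_succ (j : Fin m) : reflTailProd A j.succ = reflTailProd (Fin.tail A) j := by
  simp [reflTailProd, List.finRange_succ, List.filter_map, Function.comp_def, Fin.tail]

end Tail

lemma sum_reflTailProd_mul_one_sub_reflOf {m n : ℕ} (A : Matrix (Fin m) (Fin n) ℝ) :
    ∑ j, reflTailProd A j * (1 - reflOf (A j)) = 1 - reflProd A := by
  induction m with
  | zero => simp [reflProd]
  | succ m ih =>
    have htail : ∑ j : Fin m, reflTailProd (Fin.tail A) j * (1 - reflOf (A j.succ))
        = 1 - reflProd (Fin.tail A) := ih (Fin.tail A)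
    rw [Fin.sum_univ_succ, reflTailProd_zero]
    simp only [reflTailProd_succ]
    rw [htail, reflProd_succ]
    noncomm_ring

theorem Fmat_mul_eq (m n : ℕ) (A : Matrix (Fin m) (Fin n) ℝ) :
    Fmat A * A = 1 - reflProd A := by
  have summand (j : Fin m) :
      (2 / ∑ k, A j k ^ 2) • (reflTailProd A j * vecMulVec (A j) (Pi.single j 1)) * A
        = reflTailProd A j * (1 - reflOf (A j)) := by
    rw [Matrix.smul_mul, Matrix.mul_assoc, vecMulVec_mul, single_one_vecMul, one_sub_reflOf,
      Matrix.mul_smul]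
    rfl
  rw [Fmat, Matrix.sum_mul]
  simp only [summand]
  exact sum_reflTailProd_mul_one_sub_reflOf A
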